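/- For every natural number N, the sum of log p over all primes p ≤ N satisfies ∑_{p ≤ N, p prime} log p ≤ N · log 4. -/

import Mathlib

/-- Chebyshev's bound: for every natural number `N`,
`∑_{p ≤ N, p prime} log p ≤ N · log 4`. -/
theorem stmt9 (N : ℕ) :
    ∑ p ∈ Finset.filter Nat.Prime (Finset.range (N + 1)), Real.log p ≤ N * Real.log 4 := by
  rw [← Nat.primesLE_eq_filter_range, ← Chebyshev.theta_eq_sum_primesLE_log, mul_comm]
  exact Chebyshev.theta_le_log4_mul_x N.cast_nonneg
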